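/- Let R̂ be a nonzero Laurent polynomial over ℝ and let p, N, M be natural numbers. Suppose g and f are real polynomials such that T^N · R̂ equals the image of g in the ring of Laurent polynomials and T^M · ((1 − T^{−2})^p · R̂) equals the image of f. Then the multiplicity of 1 as a root of f equals p plus the multiplicity of 1 as a root of g. -/

import Mathlib

/-!
Multiplying by a power of `T` does not change the order of vanishing at a nonzero point, so
both sides may be read off from `T ^ k * (X ^ 2 - 1) ^ p * R̂` for suitable `k : ℤ`, using
`1 - T⁻² = T⁻² (X ^ 2 - 1)`; and `X ^ 2 - 1 = (X - 1)(X + 1)` vanishes simply at `1`.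
-/

open LaurentPolynomial Polynomial

namespace Polynomial

variable {R : Type*} [CommRing R] [IsDomain R]

theorem rootMultiplicity_X_pow_mul {a : R} (ha : a ≠ 0) (n : ℕ) (f : R[X]) :
    (X ^ n * f).rootMultiplicity a = f.rootMultiplicity a := by
  rcases eq_or_ne f 0 with rfl | hf
  · simp
  rw [rootMultiplicity_mul (mul_ne_zero (pow_ne_zero n X_ne_zero) hf),
    rootMultiplicity_eq_zero (by simp [ha]), zero_add]

theorem rootMultiplicity_eq_of_T_mul_eq_toLaurent {a : R} (ha : a ≠ 0) {f g : R[X]}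
    {m n : ℤ} {q : R[T;T⁻¹]} (hf : T m * q = toLaurent f) (hg : T n * q = toLaurent g) :
    f.rootMultiplicity a = g.rootMultiplicity a := by
  wlog hmn : m ≤ n generalizing f g m n
  · exact (this hg hf (le_of_not_ge hmn)).symm
  obtain ⟨d, rfl⟩ := Int.le.dest hmn
  have hgf : g = X ^ d * f := by
    rw [← toLaurent_inj, ← hg, map_mul, ← hf, toLaurent_X_pow, T_add]
    ring
  rw [hgf, rootMultiplicity_X_pow_mul ha]

theorem rootMultiplicity_one_X_sq_sub_one_pow_mul (h2 : (2 : R) ≠ 0) (p : ℕ) {g : R[X]}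
    (hg : g ≠ 0) : ((X ^ 2 - 1) ^ p * g).rootMultiplicity 1 = p + g.rootMultiplicity 1 := by
  have hfac : (X ^ 2 - 1) ^ p * g = (X + C 1) ^ p * g * (X - C 1) ^ p := by
    rw [C_1, mul_right_comm, ← mul_pow]
    ring
  have hroot : ¬ ((X + C 1 : R[X]) ^ p).IsRoot 1 := by
    simp [IsRoot, one_add_one_eq_two, h2]
  have hX1 : (X + C 1 : R[X]) ^ p ≠ 0 := ((monic_X_add_C 1).pow p).ne_zero
  rw [hfac, rootMultiplicity_mul_X_sub_C_pow (mul_ne_zero hX1 hg),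
    rootMultiplicity_mul (mul_ne_zero hX1 hg), rootMultiplicity_eq_zero hroot]
  ring

end Polynomial

theorem LaurentPolynomial.one_sub_T_neg_two {R : Type*} [Ring R] :
    (1 - T (-2) : R[T;T⁻¹]) = T (-2) * toLaurent (X ^ 2 - 1 : R[X]) := by
  rw [map_sub, map_one, toLaurent_X_pow, mul_sub, mul_one, ← T_add]
  norm_num [T_zero]

/-- If `R̂ ≠ 0` is a Laurent polynomial over ℝ, and `g, f` are real
polynomials with `T^N · R̂ = g` and `T^M · ((1 - T⁻²)^p · R̂) = f` in the ring of Laurent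
polynomials, then the multiplicity of `1` as a root of `f` equals `p` plus the
multiplicity of `1` as a root of `g`. -/
theorem order_of_vanishing_at_one (Rhat : LaurentPolynomial ℝ) (hR : Rhat ≠ 0)
    (p N M : ℕ) (g f : Polynomial ℝ)
    (hg : T (N : ℤ) * Rhat = g.toLaurent)
    (hf : T (M : ℤ) * ((1 - T (-2)) ^ p * Rhat) = f.toLaurent) :
    f.rootMultiplicity 1 = p + g.rootMultiplicity 1 := by
  set Q : ℝ[T;T⁻¹] := toLaurent ((X ^ 2 - 1 : ℝ[X]) ^ p) * Rhat
  have hfQ : T (M - 2 * p) * Q = toLaurent f := by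
    rw [← hf, one_sub_T_neg_two, mul_pow, T_pow, ← map_pow,
      show ((p : ℤ) * -2) = -(2 * p) by ring, sub_eq_add_neg, T_add]
    ring
  have hgQ : T N * Q = toLaurent ((X ^ 2 - 1) ^ p * g) := by
    rw [map_mul, ← hg]
    ring
  have hg0 : g ≠ 0 := by
    rintro rfl
    exact mul_ne_zero (isUnit_T _).ne_zero hR (hg.trans (map_zero _))
  calc f.rootMultiplicity 1 = ((X ^ 2 - 1) ^ p * g).rootMultiplicity 1 :=
        rootMultiplicity_eq_of_T_mul_eq_toLaurent one_ne_zero hfQ hgQ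
    _ = p + g.rootMultiplicity 1 :=
        rootMultiplicity_one_X_sq_sub_one_pow_mul two_ne_zero p hg0
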